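/- Let d n : ℕ with d, n ≥ 1. Let ρA : Matrix (Fin d) (Fin d) ℂ be positive definite and let μ : Fin n → ℝ with 0 < μ s for all s; set ρB := Matrix.diagonal (fun s => (μ s : ℂ)). Let σ¼ := ρA¼ ⊗ₖ Matrix.diagonal (fun s => ((μ s) ^ (1/4 : ℝ) : ℂ)), where ρA¼ is the positive semidefinite square root of the positive semidefinite square root of ρA. Define P := { σ¼ * M * σ¼ | M : Matrix (Fin d × Fin n) (Fin d × Fin n) ℂ positive semidefinite } and Pτ := Γ '' P. Then { σ¼ * M * σ¼ | M positive semidefinite and Γ(M) positive semidefinite } = P ∩ Pτ. -/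

import Mathlib

/-! Since the second factor of σ¼ is diagonal, the partial transpose commutes with
conjugation by σ¼: Γ(σ¼ M σ¼) = σ¼ Γ(M) σ¼. As σ¼ is invertible, this conjugation is injective,
so σ¼ M σ¼ lies in Pτ exactly when Γ(M) is positive semidefinite. -/

open Matrix ComplexOrder Kronecker

namespace Matrix.PosSemidef

/-- The positive semidefinite square root of a positive semidefinite matrix
(the definition removed from Mathlib, restored with its old meaning). -/
noncomputable def sqrt {𝕜 : Type*} [RCLike 𝕜] {m : Type*} [Fintype m] [DecidableEq m]
    {A : Matrix m m 𝕜} (hA : PosSemidef A) : Matrix m m 𝕜 :=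
  hA.1.eigenvectorUnitary.1 * diagonal ((↑) ∘ Real.sqrt ∘ hA.1.eigenvalues) *
  (star hA.1.eigenvectorUnitary : Matrix m m 𝕜)

lemma posSemidef_sqrt {𝕜 : Type*} [RCLike 𝕜] {m : Type*} [Fintype m] [DecidableEq m]
    {A : Matrix m m 𝕜} (hA : PosSemidef A) : PosSemidef hA.sqrt := by
  have h : PosSemidef (diagonal ((↑) ∘ Real.sqrt ∘ hA.1.eigenvalues : m → 𝕜)) := by
    rw [posSemidef_diagonal_iff]
    intro i
    simp only [Function.comp_apply, RCLike.ofReal_nonneg]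
    exact Real.sqrt_nonneg _
  have := h.mul_mul_conjTranspose_same (hA.1.eigenvectorUnitary.1)
  unfold sqrt
  simpa [Matrix.star_eq_conjTranspose] using this

end Matrix.PosSemidef

/-- Partial transpose with respect to the second tensor factor. -/
def partialTranspose {d n : ℕ} (X : Matrix (Fin d × Fin n) (Fin d × Fin n) ℂ) :
    Matrix (Fin d × Fin n) (Fin d × Fin n) ℂ :=
  fun p q => X (p.1, q.2) (q.1, p.2)

/-- σ¼ = ρA^{1/4} ⊗ₖ diagonal(μ^{1/4}): the fourth root of the product density matrix. -/
noncomputable def sigmaFourth {d n : ℕ} (ρA : Matrix (Fin d) (Fin d) ℂ) (hρA : ρA.PosDef)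
    (μ : Fin n → ℝ) : Matrix (Fin d × Fin n) (Fin d × Fin n) ℂ :=
  hρA.posSemidef.posSemidef_sqrt.sqrt ⊗ₖ
    Matrix.diagonal (fun s => ((μ s ^ (1/4 : ℝ) : ℝ) : ℂ))

theorem Set.image_sep_map_mem_eq_inter_image_image {α : Type*} {Γ C : α → α}
    (hΓ : Function.Involutive Γ) (hC : Function.Injective C) (hΓC : ∀ M, Γ (C M) = C (Γ M))
    (S : Set α) : C '' {M ∈ S | Γ M ∈ S} = C '' S ∩ Γ '' (C '' S) := by
  ext X
  constructor
  · rintro ⟨M, ⟨hM, hΓM⟩, rfl⟩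
    exact ⟨⟨M, hM, rfl⟩, C (Γ M), ⟨Γ M, hΓM, rfl⟩, by rw [hΓC, hΓ]⟩
  · rintro ⟨⟨M, hM, rfl⟩, _, ⟨N, hN, rfl⟩, hNM⟩
    have hΓN : Γ N = M := hC (by rw [← hΓC, hNM])
    exact ⟨M, ⟨hM, by rwa [← hΓN, hΓ]⟩, rfl⟩

theorem Set.setOf_exists_and_eq_eq_image {α β : Type*} (p : α → Prop) (f : α → β) :
    {y | ∃ x, p x ∧ y = f x} = f '' {x | p x} :=
  Set.ext fun _ => exists_congr fun _ => and_congr_right' eq_comm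

theorem Matrix.PosSemidef.sqrt_mul_self {𝕜 : Type*} [RCLike 𝕜] {m : Type*} [Fintype m]
    [DecidableEq m] {A : Matrix m m 𝕜} (hA : PosSemidef A) : hA.sqrt * hA.sqrt = A := by
  conv_rhs => rw [hA.1.spectral_theorem]
  have hU : (star hA.1.eigenvectorUnitary : Matrix m m 𝕜) * hA.1.eigenvectorUnitary.1 = 1 :=
    Unitary.star_mul_self_of_mem hA.1.eigenvectorUnitary.2
  unfold sqrt
  simp only [Unitary.conjStarAlgAut_apply, mul_assoc]
  rw [← mul_assoc (star (hA.1.eigenvectorUnitary : Matrix m m 𝕜)), hU, one_mul,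
    ← mul_assoc (diagonal _) (diagonal _), diagonal_mul_diagonal]
  congr 3
  funext i
  simp only [Function.comp_apply]
  rw [← RCLike.ofReal_mul, Real.mul_self_sqrt (hA.eigenvalues_nonneg i)]

theorem Matrix.PosSemidef.isUnit_sqrt {𝕜 : Type*} [RCLike 𝕜] {m : Type*} [Fintype m]
    [DecidableEq m] {A : Matrix m m 𝕜} (hA : PosSemidef A) (hAu : IsUnit A) :
    IsUnit hA.sqrt := by
  rw [← isUnit_pow_iff two_ne_zero, sq, hA.sqrt_mul_self]
  exact hAu

theorem partialTranspose_involutive {d n : ℕ} :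
    Function.Involutive (partialTranspose (d := d) (n := n)) :=
  fun _ => rfl

theorem partialTranspose_kronecker_diagonal_mul_mul {d n : ℕ} (A B : Matrix (Fin d) (Fin d) ℂ)
    (c e : Fin n → ℂ) (M : Matrix (Fin d × Fin n) (Fin d × Fin n) ℂ) :
    partialTranspose ((A ⊗ₖ diagonal c) * M * (B ⊗ₖ diagonal e)) =
      (A ⊗ₖ diagonal e) * partialTranspose M * (B ⊗ₖ diagonal c) := by
  ext ⟨i, s⟩ ⟨j, t⟩
  simp only [partialTranspose, mul_apply, kroneckerMap_apply, diagonal_apply,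
    Fintype.sum_prod_type, mul_ite, ite_mul, mul_zero, zero_mul,
    Finset.sum_ite_eq, Finset.sum_ite_eq', Finset.mem_univ, if_true, Finset.sum_mul]
  exact Finset.sum_congr rfl fun k _ => Finset.sum_congr rfl fun l _ => by ring

theorem isUnit_sigmaFourth {d n : ℕ} (ρA : Matrix (Fin d) (Fin d) ℂ) (hρA : ρA.PosDef)
    (μ : Fin n → ℝ) (hμ : ∀ s, 0 < μ s) : IsUnit (sigmaFourth ρA hρA μ) := by
  refine IsUnit.kronecker ?_ (isUnit_diagonal.2 ?_)
  · exact (hρA.posSemidef.posSemidef_sqrt).isUnit_sqrt (hρA.posSemidef.isUnit_sqrt hρA.isUnit)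
  · exact Pi.isUnit_iff.2 fun s =>
      (Complex.ofReal_ne_zero.2 (Real.rpow_pos_of_pos (hμ s) _).ne').isUnit

theorem partialTranspose_sigmaFourth_mul_mul {d n : ℕ} (ρA : Matrix (Fin d) (Fin d) ℂ)
    (hρA : ρA.PosDef) (μ : Fin n → ℝ) (M : Matrix (Fin d × Fin n) (Fin d × Fin n) ℂ) :
    partialTranspose (sigmaFourth ρA hρA μ * M * sigmaFourth ρA hρA μ) =
      sigmaFourth ρA hρA μ * partialTranspose M * sigmaFourth ρA hρA μ :=
  partialTranspose_kronecker_diagonal_mul_mul _ _ _ _ M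

theorem stmt_3_general {d n : ℕ}
    (ρA : Matrix (Fin d) (Fin d) ℂ) (hρA : ρA.PosDef)
    (μ : Fin n → ℝ) (hμ : ∀ s, 0 < μ s) :
    { X : Matrix (Fin d × Fin n) (Fin d × Fin n) ℂ |
        ∃ M : Matrix (Fin d × Fin n) (Fin d × Fin n) ℂ,
          M.PosSemidef ∧ (partialTranspose M).PosSemidef ∧
          X = sigmaFourth ρA hρA μ * M * sigmaFourth ρA hρA μ } =
      { X | ∃ M : Matrix (Fin d × Fin n) (Fin d × Fin n) ℂ,
          M.PosSemidef ∧ X = sigmaFourth ρA hρA μ * M * sigmaFourth ρA hρA μ } ∩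
      (partialTranspose '' { X | ∃ M : Matrix (Fin d × Fin n) (Fin d × Fin n) ℂ,
          M.PosSemidef ∧ X = sigmaFourth ρA hρA μ * M * sigmaFourth ρA hρA μ }) := by
  have hσ : IsUnit (sigmaFourth ρA hρA μ) := isUnit_sigmaFourth ρA hρA μ hμ
  have hinj : Function.Injective fun M => sigmaFourth ρA hρA μ * M * sigmaFourth ρA hρA μ :=
    hσ.mul_left_injective.comp hσ.mul_right_injective
  have key := Set.image_sep_map_mem_eq_inter_image_image partialTranspose_involutive
    hinj (partialTranspose_sigmaFourth_mul_mul ρA hρA μ) {M | M.PosSemidef}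
  simp only [← and_assoc, Set.setOf_exists_and_eq_eq_image]
  exact key

theorem stmt_3 {d n : ℕ} (hd : 1 ≤ d) (hn : 1 ≤ n)
    (ρA : Matrix (Fin d) (Fin d) ℂ) (hρA : ρA.PosDef)
    (μ : Fin n → ℝ) (hμ : ∀ s, 0 < μ s) :
    { X : Matrix (Fin d × Fin n) (Fin d × Fin n) ℂ |
        ∃ M : Matrix (Fin d × Fin n) (Fin d × Fin n) ℂ,
          M.PosSemidef ∧ (partialTranspose M).PosSemidef ∧
          X = sigmaFourth ρA hρA μ * M * sigmaFourth ρA hρA μ } =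
      { X | ∃ M : Matrix (Fin d × Fin n) (Fin d × Fin n) ℂ,
          M.PosSemidef ∧ X = sigmaFourth ρA hρA μ * M * sigmaFourth ρA hρA μ } ∩
      (partialTranspose '' { X | ∃ M : Matrix (Fin d × Fin n) (Fin d × Fin n) ℂ,
          M.PosSemidef ∧ X = sigmaFourth ρA hρA μ * M * sigmaFourth ρA hρA μ }) :=
  stmt_3_general ρA hρA μ hμ
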